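/- Consider the layer problem of Goldbeter's mitotic oscillator: f(X,M,C) = X M (1−X)(1−M) and N(X,M,C) = (M − 7/10, 6C/(1+2C) − 3/2, (1−X−C)/4), and let K = (0, 7/10, 1/2). Then f(K) = 0, (L_N f)(K) = 0, (L_N² f)(K) = 0, and (L_N³ f)(K) ≠ 0 (indeed it is positive), so K is a contact point of order two; moreover the 2×3 matrix with rows Df(K) = (21/100, 0, 0) and D(L_N f)(K) = (0, 21/100, 0) has rank 2. Hence K is a contact cusp. -/

import Mathlib

/-!
At K = (0, 7/10, 1/2) the field is N(K) = (0, 0, 1/8), so each Lie derivative at K is 1/8 times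
a derivative in the C-direction. On the line X = 0, M = 7/10 one finds
L_N² f(0, 7/10, C) = (21/100) (6C/(1+2C) - 3/2), which vanishes at C = 1/2 with derivative
(21/100)(3/2); hence L_N³ f(K) = 63/1600 > 0. The gradients of f and of L_N f at K come from their
closed forms.
-/

/-- The Lie derivative of a scalar function g along the vector field N:
(L_N g)(z) = Dg(z) N(z). Iterated Lie derivatives are given by `(lieD N)^[j] g`. -/
noncomputable def lieD {n : ℕ} (N : (Fin n → ℝ) → (Fin n → ℝ))
    (g : (Fin n → ℝ) → ℝ) : (Fin n → ℝ) → ℝ :=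
  fun z => fderiv ℝ g z (N z)

section LieDerivative

variable {n : ℕ} {N : (Fin n → ℝ) → (Fin n → ℝ)} {g : (Fin n → ℝ) → ℝ} {z : Fin n → ℝ}

theorem ContDiffAt.lieD {k : WithTop ℕ∞} (hg : ContDiffAt ℝ (k + 1) g z)
    (hN : ContDiffAt ℝ k N z) : ContDiffAt ℝ k (lieD N g) z :=
  (hg.fderiv_right le_rfl).clm_apply hN

theorem lieD_eq_of_hasLineDerivAt {a : ℝ} (hg : DifferentiableAt ℝ g z)
    (h : HasLineDerivAt ℝ g a z (N z)) : lieD N g z = a := by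
  rw [lieD, ← hg.lineDeriv_eq_fderiv, h.lineDeriv]

end LieDerivative

theorem rank_of_two_coordinate_rows {K : Type*} [Field K] {a b : K} (ha : a ≠ 0) (hb : b ≠ 0) :
    (Matrix.of ![![a, 0, 0], ![0, b, 0]]).rank = 2 := by
  refine LinearIndependent.rank_matrix (LinearIndependent.pair_iff.2 fun s t hst => ?_)
  have h0 := congrFun hst 0
  have h1 := congrFun hst 1
  simp_all

noncomputable def cyclinRate (c : ℝ) : ℝ := 6 * c / (1 + 2 * c) - 3 / 2

def mitoticF (p : Fin 3 → ℝ) : ℝ := p 0 * p 1 * (1 - p 0) * (1 - p 1)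

noncomputable def mitoticN (p : Fin 3 → ℝ) : Fin 3 → ℝ :=
  ![p 1 - 7 / 10, cyclinRate (p 2), (1 - p 0 - p 2) / 4]

noncomputable def mitoticLieF (p : Fin 3 → ℝ) : ℝ :=
  p 1 * (1 - p 1) * (1 - 2 * p 0) * (p 1 - 7 / 10)
    + p 0 * (1 - p 0) * (1 - 2 * p 1) * cyclinRate (p 2)

theorem cyclinRate_half : cyclinRate (1 / 2) = 0 := by
  norm_num [cyclinRate]

theorem hasDerivAt_cyclinRate {c : ℝ} (hc : 1 + 2 * c ≠ 0) :
    HasDerivAt cyclinRate (6 / (1 + 2 * c) ^ 2) c := by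
  have h : HasDerivAt cyclinRate _ c := (((hasDerivAt_id' c).const_mul 6).div
    (((hasDerivAt_id' c).const_mul 2).const_add 1) hc).sub_const (3 / 2)
  convert h using 1
  ring

theorem contDiffAt_mitoticN {k : WithTop ℕ∞} {z : Fin 3 → ℝ} (hz : 1 + 2 * z 2 ≠ 0) :
    ContDiffAt ℝ k mitoticN z := by
  rw [contDiffAt_pi]
  intro i
  fin_cases i <;> simp [mitoticN, cyclinRate] <;> fun_prop (disch := assumption)

theorem contDiffAt_mitoticLieF {k : WithTop ℕ∞} {z : Fin 3 → ℝ} (hz : 1 + 2 * z 2 ≠ 0) :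
    ContDiffAt ℝ k mitoticLieF z := by
  unfold mitoticLieF cyclinRate
  fun_prop (disch := assumption)

theorem fderiv_mitoticF_apply (z v : Fin 3 → ℝ) :
    fderiv ℝ mitoticF z v =
      z 1 * (1 - z 1) * (1 - 2 * z 0) * v 0 + z 0 * (1 - z 0) * (1 - 2 * z 1) * v 1 := by
  have h0 := hasFDerivAt_apply (𝕜 := ℝ) (0 : Fin 3) z
  have h1 := hasFDerivAt_apply (𝕜 := ℝ) (1 : Fin 3) z
  have H : HasFDerivAt mitoticF _ z := ((h0.mul h1).mul (h0.const_sub 1)).mul (h1.const_sub 1)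
  rw [H.fderiv]
  simp
  ring

theorem lieD_mitoticF : lieD mitoticN mitoticF = mitoticLieF := by
  funext z
  simp [lieD, fderiv_mitoticF_apply, mitoticN, mitoticLieF]

theorem fderiv_mitoticLieF_apply {z : Fin 3 → ℝ} (hz : 1 + 2 * z 2 ≠ 0) (v : Fin 3 → ℝ) :
    fderiv ℝ mitoticLieF z v =
      (z 1 * (1 - z 1) * (-2) * (z 1 - 7 / 10)
          + (1 - 2 * z 0) * (1 - 2 * z 1) * cyclinRate (z 2)) * v 0
        + (((1 - 2 * z 1) * (z 1 - 7 / 10) + z 1 * (1 - z 1)) * (1 - 2 * z 0)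
          + z 0 * (1 - z 0) * (-2) * cyclinRate (z 2)) * v 1
        + z 0 * (1 - z 0) * (1 - 2 * z 1) * (6 / (1 + 2 * z 2) ^ 2) * v 2 := by
  have h0 := hasFDerivAt_apply (𝕜 := ℝ) (0 : Fin 3) z
  have h1 := hasFDerivAt_apply (𝕜 := ℝ) (1 : Fin 3) z
  have h2 := (hasDerivAt_cyclinRate hz).comp_hasFDerivAt z (hasFDerivAt_apply (𝕜 := ℝ) 2 z)
  have H : HasFDerivAt mitoticLieF _ z := (((h1.mul (h1.const_sub 1)).mul
      ((h0.const_mul 2).const_sub 1)).mul (h1.sub_const (7 / 10))).add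
    (((h0.mul (h0.const_sub 1)).mul ((h1.const_mul 2).const_sub 1)).mul h2)
  rw [H.fderiv]
  simp
  ring

theorem lieD_mitoticLieF_on_cyclin_axis {c : ℝ} (hc : 1 + 2 * c ≠ 0) :
    lieD mitoticN mitoticLieF ![0, 7 / 10, c] = 21 / 100 * cyclinRate c := by
  rw [lieD, fderiv_mitoticLieF_apply (by simpa using hc)]
  simp [mitoticN]
  norm_num

theorem mitoticN_cusp : mitoticN ![0, 7 / 10, 1 / 2] = ![0, 0, 1 / 8] := by
  ext i
  fin_cases i <;> simp [mitoticN, cyclinRate] <;> norm_num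

theorem gradient_mitoticF_cusp :
    (fun i => fderiv ℝ mitoticF ![0, 7 / 10, 1 / 2] (Pi.single i 1)) = ![21 / 100, 0, 0] := by
  funext i
  rw [fderiv_mitoticF_apply]
  fin_cases i <;> simp
  norm_num

theorem gradient_mitoticLieF_cusp :
    (fun i => fderiv ℝ mitoticLieF ![0, 7 / 10, 1 / 2] (Pi.single i 1)) = ![0, 21 / 100, 0] := by
  funext i
  rw [fderiv_mitoticLieF_apply (by simp)]
  fin_cases i <;> simp <;> norm_num [cyclinRate]

theorem lieD_lieD_mitoticLieF_cusp :
    lieD mitoticN (lieD mitoticN mitoticLieF) ![0, 7 / 10, 1 / 2] = 63 / 1600 := by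
  have hK : (1 : ℝ) + 2 * ![(0 : ℝ), 7 / 10, 1 / 2] 2 ≠ 0 := by simp
  refine lieD_eq_of_hasLineDerivAt
    (((contDiffAt_mitoticLieF (k := 2) hK).lieD (contDiffAt_mitoticN hK)).differentiableAt
      one_ne_zero) ?_
  have hline : ∀ t : ℝ, ![0, 7 / 10, 1 / 2] + t • mitoticN ![0, 7 / 10, 1 / 2] =
      ![0, 7 / 10, 1 / 2 + t / 8] := by
    intro t
    rw [mitoticN_cusp]
    ext i
    fin_cases i <;> simp
    ring
  have hrate : HasDerivAt (fun t : ℝ => 21 / 100 * cyclinRate (1 / 2 + t / 8)) (63 / 1600) 0 := by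
    have h : HasDerivAt (fun t : ℝ => 21 / 100 * cyclinRate (1 / 2 + t / 8)) _ 0 :=
      ((hasDerivAt_cyclinRate (c := 1 / 2 + 0 / 8) (by norm_num)).comp 0
        (((hasDerivAt_id' (0 : ℝ)).div_const 8).const_add (1 / 2))).const_mul (21 / 100)
    convert h using 1
    norm_num
  refine hrate.congr_of_eventuallyEq ?_
  filter_upwards [eventually_ne_nhds (show (0 : ℝ) ≠ -8 by norm_num)] with t ht
  rw [hline, lieD_mitoticLieF_on_cyclin_axis]
  contrapose! ht
  linarith

/-- For Goldbeter's mitotic oscillator layer problem and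
K = (0, 7/10, 1/2): f(K) = L_N f(K) = L_N² f(K) = 0 and L_N³ f(K) ≠ 0 (indeed it is
positive), so K is a contact point of order two; moreover the 2×3 matrix with rows
Df(K) = (21/100, 0, 0) and D(L_N f)(K) = (0, 21/100, 0) has rank 2.
Hence K is a contact cusp. -/
theorem mitotic_oscillator_cusp
    (f : (Fin 3 → ℝ) → ℝ)
    (hf : f = fun p => p 0 * p 1 * (1 - p 0) * (1 - p 1))
    (N : (Fin 3 → ℝ) → (Fin 3 → ℝ))
    (hN : N = fun p => ![p 1 - 7 / 10,
      6 * p 2 / (1 + 2 * p 2) - 3 / 2, (1 - p 0 - p 2) / 4])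
    (K : Fin 3 → ℝ) (hK : K = ![0, 7 / 10, 1 / 2]) :
    f K = 0 ∧ lieD N f K = 0 ∧ (lieD N)^[2] f K = 0 ∧
      ((lieD N)^[3] f K ≠ 0 ∧ 0 < (lieD N)^[3] f K) ∧
      (fun i => fderiv ℝ f K (Pi.single i 1)) = ![21 / 100, 0, 0] ∧
      (fun i => fderiv ℝ (lieD N f) K (Pi.single i 1)) = ![0, 21 / 100, 0] ∧
      (Matrix.of ![fun i => fderiv ℝ f K (Pi.single i 1),
        fun i => fderiv ℝ (lieD N f) K (Pi.single i 1)]).rank = 2 := by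
  obtain rfl : f = mitoticF := hf
  obtain rfl : N = mitoticN := hN
  subst hK
  have third : (lieD mitoticN)^[3] mitoticF ![0, 7 / 10, 1 / 2] = 63 / 1600 := by
    simpa only [Function.iterate_succ_apply', Function.iterate_zero_apply, lieD_mitoticF]
      using lieD_lieD_mitoticLieF_cusp
  refine ⟨by simp [mitoticF], by simp [lieD_mitoticF, mitoticLieF], ?_,
    ⟨by norm_num [third], by norm_num [third]⟩, gradient_mitoticF_cusp,
    by rw [lieD_mitoticF, gradient_mitoticLieF_cusp], ?_⟩
  · rw [Function.iterate_succ_apply', Function.iterate_one, lieD_mitoticF,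
      lieD_mitoticLieF_on_cyclin_axis (by norm_num), cyclinRate_half, mul_zero]
  · rw [lieD_mitoticF, gradient_mitoticF_cusp, gradient_mitoticLieF_cusp]
    exact rank_of_two_coordinate_rows (by norm_num) (by norm_num)
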